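/- arXiv:1004.2589 — 5 statements merged into one kernel-verified Lean document; each statement's English description precedes it below -/
import Mathlib

section
/- For every N ≥ 2, the eigenspace of the Ising Hamiltonian H0 for the eigenvalue N − 1 (its largest eigenvalue) is exactly the two-dimensional span of the basis vectors e(const false) and e(const true): a vector v satisfies H0.mulVec v = (N−1) • v if and only if v ∈ Submodule.span ℂ {e(const false), e(const true)}. -/
open Matrix

/-- `Z n`: the Pauli-Z operator acting on site `n` of the chain. -/
noncomputable def Zop (N : ℕ) (n : Fin N) : Matrix (Fin N → Bool) (Fin N → Bool) ℂ :=
  Matrix.diagonal fun s => if s n = false then 1 else -1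

/-- The nearest-neighbour Ising Hamiltonian `H0 = ∑_{n=0}^{N-2} Z_n Z_{n+1}`. -/
noncomputable def IsingH0 (N : ℕ) : Matrix (Fin N → Bool) (Fin N → Bool) ℂ :=
  ∑ n ∈ (Finset.range (N - 1)).attach,
    Zop N ⟨n.1, by have := Finset.mem_range.mp n.2; omega⟩ *
    Zop N ⟨n.1 + 1, by have := Finset.mem_range.mp n.2; omega⟩

/-- The standard basis vector at the bit string `s`. -/
noncomputable def e {N : ℕ} (s : Fin N → Bool) : (Fin N → Bool) → ℂ :=
  Pi.single s 1

noncomputable def dval (N : ℕ) (s : Fin N → Bool) : ℂ :=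
  ∑ n ∈ (Finset.range (N - 1)).attach,
    if s ⟨n.1, by have := Finset.mem_range.mp n.2; omega⟩ =
       s ⟨n.1 + 1, by have := Finset.mem_range.mp n.2; omega⟩ then 1 else -1

lemma isingH0_eq_diagonal (N : ℕ) : IsingH0 N = Matrix.diagonal (dval N) := by
  unfold IsingH0 dval Zop
  ext i j
  rw [Matrix.sum_apply]
  by_cases hij : i = j
  · subst hij
    simp only [Matrix.diagonal_mul_diagonal, Matrix.diagonal_apply_eq]
    apply Finset.sum_congr rfl
    intro n _
    cases h1 : i ⟨n.1, by have := Finset.mem_range.mp n.2; omega⟩ <;>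
      cases h2 : i ⟨n.1 + 1, by have := Finset.mem_range.mp n.2; omega⟩ <;>
      simp [h1, h2]
  · simp [Matrix.diagonal_mul_diagonal, Matrix.diagonal_apply_ne _ hij]

lemma dval_eq_iff (N : ℕ) (hN : 1 ≤ N) (s : Fin N → Bool) :
    dval N s = (N : ℂ) - 1 ↔
      ∀ n (h : n < N - 1), s ⟨n, by omega⟩ = s ⟨n + 1, by omega⟩ := by
  have hcard : (Finset.range (N - 1)).attach.card = N - 1 := by simp
  have hZ : dval N s =
      (((∑ n ∈ (Finset.range (N - 1)).attach,
        if s ⟨n.1, by have := Finset.mem_range.mp n.2; omega⟩ =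
           s ⟨n.1 + 1, by have := Finset.mem_range.mp n.2; omega⟩ then (1 : ℤ) else -1) : ℤ) : ℂ) := by
    rw [dval]
    push_cast
    rfl
  rw [hZ]
  have hiff : ((((∑ n ∈ (Finset.range (N - 1)).attach,
        if s ⟨n.1, by have := Finset.mem_range.mp n.2; omega⟩ =
           s ⟨n.1 + 1, by have := Finset.mem_range.mp n.2; omega⟩ then (1 : ℤ) else -1) : ℤ) : ℂ)
      = (N : ℂ) - 1) ↔
      ((∑ n ∈ (Finset.range (N - 1)).attach,
        if s ⟨n.1, by have := Finset.mem_range.mp n.2; omega⟩ =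
           s ⟨n.1 + 1, by have := Finset.mem_range.mp n.2; omega⟩ then (1 : ℤ) else -1) : ℤ)
      = (N : ℤ) - 1 := by
    constructor
    · intro h; exact_mod_cast h
    · intro h; rw [h]; push_cast; ring
  rw [hiff]
  constructor
  · intro h n hn
    have hsum0 : ∑ m ∈ (Finset.range (N - 1)).attach,
        ((1 : ℤ) - if s ⟨m.1, by have := Finset.mem_range.mp m.2; omega⟩ =
           s ⟨m.1 + 1, by have := Finset.mem_range.mp m.2; omega⟩ then (1 : ℤ) else -1) = 0 := by
      rw [Finset.sum_sub_distrib, h, Finset.sum_const, hcard]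
      simp
      omega
    have hall := (Finset.sum_eq_zero_iff_of_nonneg (by
      intro m _
      split <;> norm_num)).mp hsum0
    have := hall ⟨n, Finset.mem_range.mpr hn⟩ (Finset.mem_attach _ _)
    by_contra hc
    rw [if_neg hc] at this
    norm_num at this
  · intro h
    have : ∀ m ∈ (Finset.range (N - 1)).attach,
        (if s ⟨m.1, by have := Finset.mem_range.mp m.2; omega⟩ =
           s ⟨m.1 + 1, by have := Finset.mem_range.mp m.2; omega⟩ then (1 : ℤ) else -1) = 1 := by
      intro m _
      rw [if_pos (h m.1 (Finset.mem_range.mp m.2))]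
    rw [Finset.sum_congr rfl this, Finset.sum_const, hcard]
    simp
    omega

lemma const_char (N : ℕ) (hN : 1 ≤ N) (s : Fin N → Bool) :
    (∀ n (h : n < N - 1), s ⟨n, by omega⟩ = s ⟨n + 1, by omega⟩) ↔
      (s = fun _ => false) ∨ (s = fun _ => true) := by
  constructor
  · intro h
    have key : ∀ i : Fin N, s i = s ⟨0, by omega⟩ := by
      rintro ⟨m, hm⟩
      induction m with
      | zero => rfl
      | succ k ih =>
        have hk : k < N := by omega
        have hk1 : k < N - 1 := by omega
        rw [← h k hk1]
        exact ih hk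
    cases h0 : s ⟨0, by omega⟩
    · left; funext i; rw [key i, h0]
    · right; funext i; rw [key i, h0]
  · rintro (h | h) n hn <;> simp [h]

/-- For every `N ≥ 2`, the eigenspace of `H0` for its largest eigenvalue `N − 1` is
exactly the two-dimensional span of `e(0⋯0)` and `e(1⋯1)`. -/
theorem isingH0_top_eigenspace (N : ℕ) (hN : 2 ≤ N) (v : (Fin N → Bool) → ℂ) :
    (IsingH0 N).mulVec v = ((N : ℂ) - 1) • v ↔
      v ∈ Submodule.span ℂ ({e (fun _ => false), e (fun _ => true)} :
        Set ((Fin N → Bool) → ℂ)) := by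
  have hN1 : 1 ≤ N := by omega
  have hne : (fun _ : Fin N => false) ≠ (fun _ : Fin N => true) := by
    intro h
    have := congrFun h ⟨0, by omega⟩
    simp at this
  have hchar : ∀ s : Fin N → Bool, dval N s = (N : ℂ) - 1 ↔
      (s = fun _ => false) ∨ (s = fun _ => true) := fun s =>
    (dval_eq_iff N hN1 s).trans (const_char N hN1 s)
  rw [isingH0_eq_diagonal]
  have hmv : ∀ s, (Matrix.diagonal (dval N)).mulVec v s = dval N s * v s := by
    intro s
    rw [Matrix.mulVec_diagonal]
  constructor
  · intro h
    rw [Submodule.mem_span_pair]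
    refine ⟨v (fun _ => false), v (fun _ => true), ?_⟩
    funext t
    have ht := congrFun h t
    rw [hmv] at ht
    simp only [Pi.smul_apply, smul_eq_mul] at ht
    by_cases h0 : t = fun _ => false
    · subst h0
      simp [e, Pi.single_apply, hne, hne.symm]
    by_cases h1 : t = fun _ => true
    · subst h1
      simp [e, Pi.single_apply, hne, hne.symm]
    · have hd : dval N t ≠ (N : ℂ) - 1 := by
        simp only [ne_eq, hchar]; tauto
      have hvt : v t = 0 := by
        have := sub_eq_zero.mpr ht
        rw [← sub_mul] at this
        rcases mul_eq_zero.mp this with h' | h'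
        · exact absurd (sub_eq_zero.mp h') hd
        · exact h'
      simp [e, Pi.single_apply, hvt, Ne.symm h0, Ne.symm h1]
  · intro h
    rw [Submodule.mem_span_pair] at h
    obtain ⟨a, b, hab⟩ := h
    funext s
    rw [hmv]
    simp only [Pi.smul_apply, smul_eq_mul]
    by_cases hs : (s = fun _ => false) ∨ (s = fun _ => true)
    · rw [(hchar s).mpr hs]
    · have hvs : v s = 0 := by
        rw [← hab]
        push_neg at hs
        simp [e, Pi.single_apply, Ne.symm hs.1, Ne.symm hs.2]
      rw [hvs, mul_zero, mul_zero]
end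

section
/- For every N ≥ 2, let a : Fin N → Bool be the alternating bit string a n = (n.val % 2 = 1) and a' its bitwise complement. The eigenspace of the Ising Hamiltonian H0 for the eigenvalue −(N − 1) (its smallest eigenvalue) is exactly the two-dimensional span of e a and e a': a vector v satisfies H0.mulVec v = (−(N−1)) • v if and only if v ∈ Submodule.span ℂ {e a, e a'}. -/
open Matrix

/-- The alternating (Néel) bit string `a n = (n % 2 = 1)`, i.e. `0101⋯`. -/
def alt (N : ℕ) : Fin N → Bool := fun n => decide (n.val % 2 = 1)

/-!
`H0` is diagonal in the basis of bit strings, its entry at `s` being the number of parallel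
minus the number of antiparallel neighbouring pairs. This is at least `-(N - 1)`, with equality
exactly when every neighbouring pair is antiparallel, i.e. for the two Néel strings; the
eigenspace of a diagonal matrix is spanned by the basis vectors where the diagonal takes the value.
-/

open Finset

theorem Matrix.diagonal_mulVec_eq_smul_iff {ι R : Type*} [Fintype ι] [DecidableEq ι]
    [Semiring R] [IsRightCancelMulZero R] (d v : ι → R) (c : R) :
    diagonal d *ᵥ v = c • v ↔ ∀ i, d i ≠ c → v i = 0 := by
  simp only [funext_iff, mulVec_diagonal, Pi.smul_apply, smul_eq_mul, mul_eq_mul_right_iff]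
  exact forall_congr' fun i => or_iff_not_imp_left

theorem Pi.mem_span_single_image_iff {ι R : Type*} [Finite ι] [DecidableEq ι] [Semiring R]
    (S : Set ι) (v : ι → R) :
    v ∈ Submodule.span R ((Pi.single · (1 : R)) '' S) ↔ ∀ i ∉ S, v i = 0 := by
  simp only [← Pi.basisFun_apply, Module.Basis.mem_span_image, Set.subset_def,
    Finset.mem_coe, Finsupp.mem_support_iff, Pi.basisFun_repr]
  exact forall_congr' fun i => not_imp_comm

def isingEnergy (N : ℕ) (s : Fin N → Bool) : ℤ :=
  ∑ n ∈ (range (N - 1)).attach,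
    if s ⟨n.1, by have := mem_range.mp n.2; omega⟩ =
      s ⟨n.1 + 1, by have := mem_range.mp n.2; omega⟩ then 1 else -1

theorem isingH0_eq_diagonal_s7 (N : ℕ) :
    IsingH0 N = diagonal fun s => (isingEnergy N s : ℂ) := by
  have hbond (b c : Bool) : ((if b = false then 1 else -1) * (if c = false then 1 else -1) : ℂ) =
      ((if b = c then 1 else -1 : ℤ) : ℂ) := by
    cases b <;> cases c <;> norm_num
  simp only [IsingH0, Zop, diagonal_mul_diagonal, hbond, isingEnergy, Int.cast_sum]
  ext s t
  by_cases hst : s = t <;> simp [hst, Matrix.sum_apply]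

def IsAlternating {N : ℕ} (s : Fin N → Bool) : Prop :=
  ∀ i j : Fin N, (j : ℕ) = i + 1 → s j = !s i

theorem isingEnergy_eq_iff_isAlternating {N : ℕ} (hN : 0 < N) (s : Fin N → Bool) :
    isingEnergy N s = -((N : ℤ) - 1) ↔ IsAlternating s := by
  have hmin : -((N : ℤ) - 1) = ∑ _n ∈ (range (N - 1)).attach, (-1 : ℤ) := by
    simp [Nat.cast_sub hN]
  rw [hmin, isingEnergy, eq_comm, sum_eq_sum_iff_of_le fun n _ => by split_ifs <;> norm_num]
  constructor
  · rintro h ⟨i, hi⟩ ⟨j, hj⟩ (rfl : j = i + 1)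
    have := h ⟨i, mem_range.mpr (by omega)⟩ (mem_attach _ _)
    split_ifs at this with hij
    exact Bool.eq_not.mpr (Ne.symm hij)
  · intro h n _
    have hn := mem_range.mp n.2
    simp [h ⟨n, by omega⟩ ⟨n + 1, by omega⟩ rfl]

theorem alt_of_val_eq_succ {N : ℕ} {i j : Fin N} (hij : (j : ℕ) = i + 1) :
    alt N j = !alt N i := by
  rw [alt, alt, hij, ← decide_not, decide_eq_decide]
  omega

theorem isAlternating_xor_alt (N : ℕ) (b : Bool) : IsAlternating fun i => xor b (alt N i) := by
  intro i j hij
  simp only [alt_of_val_eq_succ hij, Bool.xor_not]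

theorem IsAlternating.eq_xor_alt {N : ℕ} {s : Fin N → Bool} (h : IsAlternating s) (hN : 0 < N)
    (i : Fin N) : s i = xor (s ⟨0, hN⟩) (alt N i) := by
  obtain ⟨i, hi⟩ := i
  induction i with
  | zero => simp [alt]
  | succ k ih =>
    rw [h ⟨k, by omega⟩ ⟨k + 1, hi⟩ rfl, ih (by omega),
      alt_of_val_eq_succ (i := ⟨k, by omega⟩) (j := ⟨k + 1, hi⟩) rfl, Bool.xor_not]

theorem isAlternating_iff {N : ℕ} (hN : 0 < N) (s : Fin N → Bool) :
    IsAlternating s ↔ s = alt N ∨ s = fun n => !alt N n := by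
  constructor
  · intro h
    cases h0 : s ⟨0, hN⟩
    · left; funext i; simpa [h0] using h.eq_xor_alt hN i
    · right; funext i; simpa [h0] using h.eq_xor_alt hN i
  · rintro (rfl | rfl)
    · simpa using isAlternating_xor_alt N false
    · simpa using isAlternating_xor_alt N true

/-- For every `N ≥ 2`, the eigenspace of `H0` for its smallest eigenvalue `−(N − 1)` is
exactly the two-dimensional span of the two Néel states `e a` and `e a'`. -/
theorem isingH0_bottom_eigenspace (N : ℕ) (hN : 2 ≤ N) (v : (Fin N → Bool) → ℂ) :
    (IsingH0 N).mulVec v = (-((N : ℂ) - 1)) • v ↔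
      v ∈ Submodule.span ℂ ({e (alt N), e (fun n => !(alt N n))} :
        Set ((Fin N → Bool) → ℂ)) := by
  have hcast (s : Fin N → Bool) :
      (isingEnergy N s : ℂ) = -((N : ℂ) - 1) ↔ isingEnergy N s = -((N : ℤ) - 1) := by
    exact_mod_cast Iff.rfl
  rw [isingH0_eq_diagonal_s7, Matrix.diagonal_mulVec_eq_smul_iff, e, e,
    ← Set.image_pair (Pi.single · (1 : ℂ)), Pi.mem_span_single_image_iff]
  refine forall_congr' fun s => ?_
  rw [ne_eq, hcast, isingEnergy_eq_iff_isAlternating (by omega), isAlternating_iff (by omega),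
    Set.mem_insert_iff, Set.mem_singleton_iff]
end

section
/- For every N ≥ 1, every element of the real Lie subalgebra of the 2^N × 2^N complex matrices generated by the set {Complex.I • H0, Complex.I • H1} commutes with the parity operator M. -/
/-!
The parity `M` is the permutation matrix of the global bit flip. Each `X n` is the permutation
matrix of a single bit flip, which commutes with the global one, so `X n` commutes with `M`.
Conjugating a diagonal matrix by `M` flips all bits of its index, which negates `Z n`; hence
`Z n` anticommutes with `M` and every product `Z n * Z m` commutes with it. Both generators
therefore lie in the centralizer of `M`, an associative subalgebra and hence a Lie subalgebra.
-/

open Matrix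

attribute [local instance] LieRing.ofAssociativeRing

/-- `X n`: the Pauli-X (bit flip) operator acting on site `n`. -/
noncomputable def Xop (N : ℕ) (n : Fin N) : Matrix (Fin N → Bool) (Fin N → Bool) ℂ :=
  Matrix.of fun s t => if t = Function.update s n (!(s n)) then 1 else 0

/-- The global transverse-field Hamiltonian `H1 = ∑_n X_n`. -/
noncomputable def IsingH1 (N : ℕ) : Matrix (Fin N → Bool) (Fin N → Bool) ℂ :=
  ∑ n : Fin N, Xop N n

/-- The X-parity operator `M = ∏_n X_n`, the global spin flip. -/
noncomputable def parityM (N : ℕ) : Matrix (Fin N → Bool) (Fin N → Bool) ℂ :=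
  Matrix.of fun s t => if t = (fun n => !(s n)) then 1 else 0

/-- The dynamical Lie algebra `𝔏`: the real Lie subalgebra of the `2^N × 2^N` complex
matrices generated by `{i H0, i H1}`. -/
noncomputable def dynLieAlg (N : ℕ) :
    LieSubalgebra ℝ (Matrix (Fin N → Bool) (Fin N → Bool) ℂ) :=
  LieSubalgebra.lieSpan ℝ (Matrix (Fin N → Bool) (Fin N → Bool) ℂ)
    {Complex.I • IsingH0 N, Complex.I • IsingH1 N}

namespace Subalgebra

variable {R A : Type*} [CommRing R] [Ring A] [Algebra R A]

def toLieSubalgebra (S : Subalgebra R A) : LieSubalgebra R A where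
  toSubmodule := S.toSubmodule
  lie_mem' {a b} ha hb := by
    rw [Ring.lie_def]
    exact sub_mem (mul_mem ha hb) (mul_mem hb ha)

theorem mem_toLieSubalgebra_centralizer_singleton {a x : A} :
    x ∈ (centralizer R {a}).toLieSubalgebra ↔ Commute x a := by
  change x ∈ centralizer R {a} ↔ _
  simp only [mem_centralizer_iff, Set.mem_singleton_iff, forall_eq]
  exact eq_comm

end Subalgebra

theorem commute_mul_of_anticommute {R : Type*} [Ring R] {a b c : R}
    (ha : a * c = -(c * a)) (hb : b * c = -(c * b)) : Commute (a * b) c := by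
  rw [Commute, SemiconjBy, mul_assoc, hb, mul_neg, ← mul_assoc, ha, neg_mul, neg_neg, mul_assoc]

section BitFlip

open Equiv

variable {ι : Type*}

def bitFlip : Perm (ι → Bool) :=
  Function.Involutive.toPerm (fun s n => !(s n)) fun s => by simp

@[simp]
theorem bitFlip_apply (s : ι → Bool) : bitFlip s = fun n => !(s n) :=
  rfl

variable [DecidableEq ι]

def bitFlipAt (n : ι) : Perm (ι → Bool) :=
  Function.Involutive.toPerm (fun s => Function.update s n !(s n)) fun s => by
    ext m
    by_cases h : m = n <;> simp [h]

@[simp]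
theorem bitFlipAt_apply (n : ι) (s : ι → Bool) : bitFlipAt n s = Function.update s n !(s n) :=
  rfl

theorem commute_bitFlip_bitFlipAt (n : ι) :
    Commute (bitFlip : Perm (ι → Bool)) (bitFlipAt n) := by
  ext s m
  by_cases h : m = n <;> simp [h]

end BitFlip

section PermMatrix

open Equiv

variable {n R : Type*} [DecidableEq n] [Fintype n] [Semiring R]

theorem Commute.permMatrix {σ τ : Perm n} (h : Commute σ τ) :
    Commute (σ.permMatrix R) (τ.permMatrix R) := by
  rw [Commute, SemiconjBy, ← permMatrix_mul, ← permMatrix_mul, h.eq]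

theorem Matrix.permMatrix_mul_diagonal (σ : Perm n) (d : n → R) :
    σ.permMatrix R * diagonal d = diagonal (d ∘ σ) * σ.permMatrix R := by
  ext i j
  rw [PEquiv.toMatrix_toPEquiv_mul, PEquiv.mul_toMatrix_toPEquiv]
  simp [diagonal_apply, Equiv.eq_symm_apply]

end PermMatrix

theorem parityM_eq_permMatrix (N : ℕ) : parityM N = bitFlip.permMatrix ℂ := by
  ext s t
  simp [parityM, eq_comm]

theorem Xop_eq_permMatrix (N : ℕ) (n : Fin N) : Xop N n = (bitFlipAt n).permMatrix ℂ := by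
  ext s t
  simp [Xop, eq_comm]

theorem Zop_mul_parityM (N : ℕ) (n : Fin N) : Zop N n * parityM N = -(parityM N * Zop N n) := by
  rw [parityM_eq_permMatrix, Zop, permMatrix_mul_diagonal, ← neg_mul, diagonal_neg]
  congr
  ext s
  cases h : s n <;> simp [h]

theorem commute_Xop_parityM (N : ℕ) (n : Fin N) : Commute (Xop N n) (parityM N) := by
  rw [Xop_eq_permMatrix, parityM_eq_permMatrix]
  exact (commute_bitFlip_bitFlipAt n).symm.permMatrix

theorem commute_IsingH0_parityM (N : ℕ) : Commute (IsingH0 N) (parityM N) :=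
  Commute.sum_left _ _ _ fun _ _ =>
    commute_mul_of_anticommute (Zop_mul_parityM N _) (Zop_mul_parityM N _)

theorem commute_IsingH1_parityM (N : ℕ) : Commute (IsingH1 N) (parityM N) :=
  Commute.sum_left _ _ _ fun n _ => commute_Xop_parityM N n

theorem dynLieAlg_commutes_parity_general (N : ℕ) :
    ∀ A ∈ dynLieAlg N, A * parityM N = parityM N * A := by
  suffices dynLieAlg N ≤ (Subalgebra.centralizer ℝ {parityM N}).toLieSubalgebra from
    fun A hA => (Subalgebra.mem_toLieSubalgebra_centralizer_singleton.mp (this hA)).eq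
  rw [dynLieAlg, LieSubalgebra.lieSpan_le, Set.pair_subset_iff]
  simp only [SetLike.mem_coe, Subalgebra.mem_toLieSubalgebra_centralizer_singleton]
  exact ⟨(commute_IsingH0_parityM N).smul_left _, (commute_IsingH1_parityM N).smul_left _⟩

/-- For every `N ≥ 1`, every element of the dynamical Lie algebra generated by
`{i H0, i H1}` commutes with the parity operator `M`. -/
theorem dynLieAlg_commutes_parity (N : ℕ) (hN : 1 ≤ N) :
    ∀ A ∈ dynLieAlg N, A * parityM N = parityM N * A :=
  dynLieAlg_commutes_parity_general N
end

section
/- Let σx = !![0, 1; 1, 0], σy = !![0, −i; i, 0], σz = !![1, 0; 0, −1] be the 2×2 Pauli matrices over ℂ. The real Lie subalgebra of the 2×2 complex matrices generated by {Complex.I • σx, Complex.I • σz} equals the set of traceless skew-adjoint 2×2 matrices (i.e. su(2)); in particular it contains Complex.I • σy. -/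
open Matrix

attribute [local instance 100] LieRing.ofAssociativeRing

/-- The Pauli matrix `σx`. -/
noncomputable def sigmaX : Matrix (Fin 2) (Fin 2) ℂ := !![0, 1; 1, 0]

/-- The Pauli matrix `σy`. -/
noncomputable def sigmaY : Matrix (Fin 2) (Fin 2) ℂ := !![0, -Complex.I; Complex.I, 0]

/-- The Pauli matrix `σz`. -/
noncomputable def sigmaZ : Matrix (Fin 2) (Fin 2) ℂ := !![1, 0; 0, -1]

/-!
The bracket `⁅i σx, i σz⁆ = 2 i σy` puts `i σy` into the generated Lie algebra, and
`i σx, i σy, i σz` span `su(2)` over `ℝ`. Conversely `su(2)` is a Lie subalgebra containing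
the generators.
-/

namespace Matrix

variable (n : Type*) [Fintype n] [DecidableEq n]

noncomputable def specialUnitaryLieAlgebra : LieSubalgebra ℝ (Matrix n n ℂ) where
  carrier := {A | Aᴴ = -A ∧ A.trace = 0}
  add_mem' := by
    rintro A B ⟨hA, trA⟩ ⟨hB, trB⟩
    exact ⟨by rw [conjTranspose_add, hA, hB, neg_add], by rw [trace_add, trA, trB, add_zero]⟩
  zero_mem' := ⟨by rw [conjTranspose_zero, neg_zero], trace_zero n ℂ⟩
  smul_mem' := by
    rintro c A ⟨hA, trA⟩
    exact ⟨by rw [conjTranspose_smul, star_trivial, hA, smul_neg],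
      by rw [trace_smul, trA, smul_zero]⟩
  lie_mem' := by
    rintro A B ⟨hA, -⟩ ⟨hB, -⟩
    refine ⟨?_, ?_⟩
    · rw [Ring.lie_def, conjTranspose_sub, conjTranspose_mul, conjTranspose_mul, hA, hB]
      noncomm_ring
    · rw [Ring.lie_def, trace_sub, trace_mul_comm, sub_self]

variable {n}

theorem mem_specialUnitaryLieAlgebra {A : Matrix n n ℂ} :
    A ∈ specialUnitaryLieAlgebra n ↔ Aᴴ = -A ∧ A.trace = 0 :=
  Iff.rfl

theorem IsHermitian.I_smul_mem_specialUnitaryLieAlgebra {H : Matrix n n ℂ} (hH : H.IsHermitian)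
    (htr : H.trace = 0) : Complex.I • H ∈ specialUnitaryLieAlgebra n :=
  ⟨by rw [conjTranspose_smul, hH.eq, Complex.star_def, Complex.conj_I, neg_smul],
    by rw [trace_smul, htr, smul_zero]⟩

end Matrix

open Complex

theorem isHermitian_sigmaX : sigmaX.IsHermitian := by
  ext i j; fin_cases i <;> fin_cases j <;> simp [sigmaX]

theorem isHermitian_sigmaY : sigmaY.IsHermitian := by
  ext i j; fin_cases i <;> fin_cases j <;> simp [sigmaY]

theorem isHermitian_sigmaZ : sigmaZ.IsHermitian := by
  ext i j; fin_cases i <;> fin_cases j <;> simp [sigmaZ]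

theorem trace_sigmaX : sigmaX.trace = 0 := by simp [sigmaX, trace_fin_two]
theorem trace_sigmaY : sigmaY.trace = 0 := by simp [sigmaY, trace_fin_two]
theorem trace_sigmaZ : sigmaZ.trace = 0 := by simp [sigmaZ, trace_fin_two]

theorem lie_I_smul_sigmaX_I_smul_sigmaZ :
    ⁅I • sigmaX, I • sigmaZ⁆ = (2 : ℝ) • (I • sigmaY) := by
  rw [Ring.lie_def]
  ext i j; fin_cases i <;> fin_cases j <;> simp [sigmaX, sigmaY, sigmaZ] <;> ring

theorem eq_of_mem_specialUnitaryLieAlgebra_fin_two {A : Matrix (Fin 2) (Fin 2) ℂ}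
    (hA : A ∈ specialUnitaryLieAlgebra (Fin 2)) :
    A = (A 0 1).im • (I • sigmaX) + (A 0 1).re • (I • sigmaY) + (A 0 0).im • (I • sigmaZ) := by
  obtain ⟨hskew, htr⟩ := hA
  have h00 : star (A 0 0) = -A 0 0 := congrFun (congrFun hskew 0) 0
  have h10 : A 1 0 = -star (A 0 1) :=
    neg_eq_iff_eq_neg.1 (congrFun (congrFun hskew 1) 0).symm
  have h11 : A 1 1 = -A 0 0 := eq_neg_of_add_eq_zero_right (by rwa [trace_fin_two] at htr)
  have hre : (A 0 0).re = 0 := by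
    have := congrArg re h00
    simp only [star_def, conj_re, neg_re] at this
    linarith
  ext i j; fin_cases i <;> fin_cases j <;> apply Complex.ext <;>
    simp [sigmaX, sigmaY, sigmaZ, h10, h11, hre]

theorem lieSpan_I_smul_sigmaX_sigmaZ_eq :
    LieSubalgebra.lieSpan ℝ (Matrix (Fin 2) (Fin 2) ℂ) {I • sigmaX, I • sigmaZ} =
      specialUnitaryLieAlgebra (Fin 2) := by
  set L := LieSubalgebra.lieSpan ℝ (Matrix (Fin 2) (Fin 2) ℂ) {I • sigmaX, I • sigmaZ}
  have hX : I • sigmaX ∈ L := LieSubalgebra.subset_lieSpan (Set.mem_insert _ _)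
  have hZ : I • sigmaZ ∈ L := LieSubalgebra.subset_lieSpan (Set.mem_insert_of_mem _ rfl)
  have hY : I • sigmaY ∈ L := by
    have h2Y := L.lie_mem hX hZ
    rw [lie_I_smul_sigmaX_I_smul_sigmaZ] at h2Y
    simpa only [inv_smul_smul₀ (two_ne_zero (α := ℝ))] using L.smul_mem (2⁻¹ : ℝ) h2Y
  refine le_antisymm (LieSubalgebra.lieSpan_le.2 ?_) fun A hA => ?_
  · rintro _ (rfl | rfl)
    · exact isHermitian_sigmaX.I_smul_mem_specialUnitaryLieAlgebra trace_sigmaX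
    · exact isHermitian_sigmaZ.I_smul_mem_specialUnitaryLieAlgebra trace_sigmaZ
  · rw [eq_of_mem_specialUnitaryLieAlgebra_fin_two hA]
    exact L.add_mem (L.add_mem (L.smul_mem _ hX) (L.smul_mem _ hY)) (L.smul_mem _ hZ)

/-- The real Lie subalgebra of the `2×2` complex matrices generated by `{i σx, i σz}`
equals `su(2)`, the set of traceless skew-adjoint matrices; in particular it contains
`i σy`. -/
theorem lieSpan_pauli_eq_su2 :
    (∀ A : Matrix (Fin 2) (Fin 2) ℂ,
      A ∈ LieSubalgebra.lieSpan ℝ (Matrix (Fin 2) (Fin 2) ℂ)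
          {Complex.I • sigmaX, Complex.I • sigmaZ} ↔
        (Aᴴ = -A ∧ A.trace = 0)) ∧
    Complex.I • sigmaY ∈ LieSubalgebra.lieSpan ℝ (Matrix (Fin 2) (Fin 2) ℂ)
      {Complex.I • sigmaX, Complex.I • sigmaZ} := by
  rw [lieSpan_I_smul_sigmaX_sigmaZ_eq]
  exact ⟨fun _ => mem_specialUnitaryLieAlgebra,
    isHermitian_sigmaY.I_smul_mem_specialUnitaryLieAlgebra trace_sigmaY⟩
end

section
/- Lyapunov control design makes the Hilbert–Schmidt distance to the target monotonically nonincreasing: let n ≥ 1 and let H0, H1, ρ_d be Hermitian n×n complex matrices with H0 * ρ_d = ρ_d * H0, and let κ > 0. Suppose ρ : ℝ → Matrix (Fin n) (Fin n) ℂ is differentiable and satisfies the controlled von Neumann equation ρ'(t) = −i • ((H0 + f(t) • H1) * ρ(t) − ρ(t) * (H0 + f(t) • H1)) with feedback field f(t) = κ · (trace ((i • (H1 * ρ_d − ρ_d * H1)) * ρ(t))).re. Then V(t) = ½ · (trace ((ρ(t) − ρ_d) * (ρ(t) − ρ_d))).re is differentiable with derivative V'(t) = −f(t)²/κ; in particular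 V'(t) ≤ 0 for all t. -/
open Matrix

attribute [local instance] Matrix.normedAddCommGroup Matrix.normedSpace

/-!
Differentiating, `V' = Re tr(ρ' (ρ - ρd))`. For `ρ' = -i[H, ρ]`, cyclicity of the trace gives
`tr([H, ρ] (ρ - ρd)) = tr(H [ρ, ρ - ρd]) = tr([H, ρd] ρ)`, and since `[H0, ρd] = 0` only the
control term `f [H1, ρd]` survives; the feedback law turns `Re tr(-i f [H1, ρd] ρ)` into `-f²/κ`.
-/

section Calculus

variable {𝕜 𝔸 l m p : Type*} [NontriviallyNormedField 𝕜] [Fintype m] [Fintype p] {x : 𝕜}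

theorem HasDerivAt.matrix_mul [NormedRing 𝔸] [NormedAlgebra 𝕜 𝔸]
    {A : 𝕜 → Matrix l m 𝔸} {B : 𝕜 → Matrix m p 𝔸} {A' : Matrix l m 𝔸} {B' : Matrix m p 𝔸}
    (hA : HasDerivAt A A' x) (hB : HasDerivAt B B' x) :
    HasDerivAt (fun y => A y * B y) (A' * B x + A x * B') x := by
  refine hasDerivAt_pi.2 fun i => hasDerivAt_pi.2 fun j => ?_
  simp only [Matrix.add_apply, Matrix.mul_apply, ← Finset.sum_add_distrib]
  exact HasDerivAt.fun_sum fun k _ =>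
    (hasDerivAt_pi.1 (hasDerivAt_pi.1 hA i) k).mul (hasDerivAt_pi.1 (hasDerivAt_pi.1 hB k) j)

theorem HasDerivAt.matrix_trace [NormedAddCommGroup 𝔸] [NormedSpace 𝕜 𝔸]
    {A : 𝕜 → Matrix m m 𝔸} {A' : Matrix m m 𝔸} (hA : HasDerivAt A A' x) :
    HasDerivAt (fun y => (A y).trace) A'.trace x :=
  HasDerivAt.fun_sum fun i _ => hasDerivAt_pi.1 (hasDerivAt_pi.1 hA i) i

theorem HasDerivAt.matrix_trace_mul_self [NormedCommRing 𝔸] [NormedAlgebra 𝕜 𝔸]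
    {A : 𝕜 → Matrix m m 𝔸} {A' : Matrix m m 𝔸} (hA : HasDerivAt A A' x) :
    HasDerivAt (fun y => (A y * A y).trace) (2 * (A' * A x).trace) x := by
  have h := (hA.matrix_mul hA).matrix_trace
  rwa [trace_add, trace_mul_comm (A x) A', ← two_mul] at h

end Calculus

namespace Matrix

variable {n R : Type*} [Fintype n] [CommRing R]

theorem trace_lie_mul (A B C : Matrix n n R) : (⁅A, B⁆ * C).trace = (A * ⁅B, C⁆).trace := by
  simp only [Ring.lie_def, sub_mul, mul_sub, trace_sub, Matrix.mul_assoc]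
  rw [trace_mul_comm B (A * C), Matrix.mul_assoc]

theorem trace_lie_add_smul_mul_sub {S : Type*} [CommRing S] [Algebra S R] {H₀ ρd : Matrix n n R}
    (h : Commute H₀ ρd) (H₁ X : Matrix n n R) (c : S) :
    (⁅H₀ + c • H₁, X⁆ * (X - ρd)).trace = c • (⁅H₁, ρd⁆ * X).trace := by
  have hX : ⁅X, X - ρd⁆ = ⁅ρd, X⁆ := by simp only [Ring.lie_def]; noncomm_ring
  have hH : ⁅H₀ + c • H₁, ρd⁆ = c • ⁅H₁, ρd⁆ := by
    simp only [Ring.lie_def, add_mul, mul_add, smul_mul_assoc, mul_smul_comm, h.eq, smul_sub]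
    abel
  rw [trace_lie_mul, hX, ← trace_lie_mul, hH, smul_mul_assoc, trace_smul]

end Matrix

theorem HasDerivAt.half_re_trace_sub_mul_self {n : Type*} [Fintype n] {ρ : ℝ → Matrix n n ℂ}
    {ρ' : Matrix n n ℂ} {t : ℝ} (ρd : Matrix n n ℂ) (h : HasDerivAt ρ ρ' t) :
    HasDerivAt (fun τ => (1 / 2 : ℝ) * ((ρ τ - ρd) * (ρ τ - ρd)).trace.re)
      (ρ' * (ρ t - ρd)).trace.re t := by
  have h := (Complex.reCLM.hasFDerivAt.comp_hasDerivAt t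
    (h.sub_const ρd).matrix_trace_mul_self).const_mul (1 / 2 : ℝ)
  simpa [Complex.reCLM_apply] using h

theorem lyapunov_distance_nonincreasing_general (n : ℕ)
    (H0 H1 ρd : Matrix (Fin n) (Fin n) ℂ)
    (hcomm : H0 * ρd = ρd * H0)
    (κ : ℝ) (hκ : 0 < κ)
    (ρ : ℝ → Matrix (Fin n) (Fin n) ℂ) (f : ℝ → ℝ)
    (hf : ∀ t, f t = κ * ((Complex.I • (H1 * ρd - ρd * H1)) * ρ t).trace.re)
    (hρ : ∀ t, HasDerivAt ρ
      ((-Complex.I) • ((H0 + f t • H1) * ρ t - ρ t * (H0 + f t • H1))) t) :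
    ∀ t, HasDerivAt (fun τ => (1 / 2 : ℝ) * ((ρ τ - ρd) * (ρ τ - ρd)).trace.re)
        (-(f t) ^ 2 / κ) t ∧ -(f t) ^ 2 / κ ≤ 0 := by
  intro t
  have hfeedback : (Complex.I * (⁅H1, ρd⁆ * ρ t).trace).re = f t / κ := by
    rw [hf, mul_div_cancel_left₀ _ hκ.ne', smul_mul_assoc, trace_smul, smul_eq_mul, Ring.lie_def]
  have hVderiv :
      ((-Complex.I • ((H0 + f t • H1) * ρ t - ρ t * (H0 + f t • H1))) * (ρ t - ρd)).trace.re
        = -(f t) ^ 2 / κ := by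
    rw [← Ring.lie_def, smul_mul_assoc, trace_smul, trace_lie_add_smul_mul_sub hcomm, smul_eq_mul,
      Complex.real_smul, neg_mul, mul_left_comm, Complex.neg_re, Complex.re_ofReal_mul, hfeedback]
    ring
  refine ⟨hVderiv ▸ (hρ t).half_re_trace_sub_mul_self ρd, ?_⟩
  exact div_nonpos_of_nonpos_of_nonneg (neg_nonpos.2 (sq_nonneg _)) hκ.le

/-- Lyapunov control design makes the Hilbert–Schmidt distance to the target
monotonically nonincreasing: if `ρ(t)` solves the controlled von Neumann equation
`ρ' = −i[H0 + f(t)H1, ρ]` with the feedback field `f(t) = κ Tr([iH1, ρ_d] ρ(t))`,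
and `[H0, ρ_d] = 0`, then `V(t) = ½ Tr((ρ(t) − ρ_d)²)` has derivative
`V'(t) = −f(t)²/κ ≤ 0`. -/
theorem lyapunov_distance_nonincreasing (n : ℕ) (hn : 1 ≤ n)
    (H0 H1 ρd : Matrix (Fin n) (Fin n) ℂ)
    (hH0 : H0.IsHermitian) (hH1 : H1.IsHermitian) (hρd : ρd.IsHermitian)
    (hcomm : H0 * ρd = ρd * H0)
    (κ : ℝ) (hκ : 0 < κ)
    (ρ : ℝ → Matrix (Fin n) (Fin n) ℂ) (f : ℝ → ℝ)
    (hf : ∀ t, f t = κ * ((Complex.I • (H1 * ρd - ρd * H1)) * ρ t).trace.re)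
    (hρ : ∀ t, HasDerivAt ρ
      ((-Complex.I) • ((H0 + f t • H1) * ρ t - ρ t * (H0 + f t • H1))) t) :
    ∀ t, HasDerivAt (fun τ => (1 / 2 : ℝ) * ((ρ τ - ρd) * (ρ τ - ρd)).trace.re)
        (-(f t) ^ 2 / κ) t ∧ -(f t) ^ 2 / κ ≤ 0 :=
  lyapunov_distance_nonincreasing_general n H0 H1 ρd hcomm κ hκ ρ f hf hρ
end
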